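/- An LD-resolvent of a simply moded query and a simply moded clause that is variable-disjoint with it is simply moded. Precisely: let A, Ā be a simply moded query with leftmost atom A, let H ← B̄ be a simply moded clause sharing no variables with the query, and let θ be a most general unifier of A and H; then the LD-resolvent (B̄, Ā)θ is a simply moded query. -/

import Mathlib

/-- First-order terms over function symbols `F` and variables `V`. -/
inductive Term (F V : Type) : Type where
  | var : V → Term F V
  | fn  : F → List (Term F V) → Term F V

namespace Term

/-- `VarIn v t` holds iff the variable `v` occurs in the term `t`. -/
inductive VarIn {F V : Type} : V → Term F V → Prop where
  | var (v : V) : VarIn v (.var v)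
  | fn {v : V} (f : F) {args : List (Term F V)} {t : Term F V} :
      t ∈ args → VarIn v t → VarIn v (.fn f args)

/-- Application of a substitution (a map from variables to terms) to a term. -/
def subst {F V : Type} (σ : V → Term F V) : Term F V → Term F V
  | .var v => σ v
  | .fn f args => .fn f (args.attach.map fun t => subst σ t.1)
termination_by t => sizeOf t
decreasing_by
  have := List.sizeOf_lt_of_mem t.2
  simp only [Term.fn.sizeOf_spec]
  omega

end Term

/-- The set of variables occurring in a list (tuple) of terms. -/
def varsOf {F V : Type} (ts : List (Term F V)) : Set V :=
  {v | ∃ t ∈ ts, Term.VarIn v t}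

/-- An atom `p(s̄, t̄)`: a relation symbol together with the tuple of terms
filling its input positions and the tuple filling its output positions. -/
structure Atom (P F V : Type) where
  pred : P
  inputs : List (Term F V)
  outputs : List (Term F V)

/-- Application of a substitution to an atom. -/
def Atom.subst {P F V : Type} (σ : V → Term F V) (A : Atom P F V) : Atom P F V :=
  ⟨A.pred, A.inputs.map (Term.subst σ), A.outputs.map (Term.subst σ)⟩

/-- The set of variables occurring in an atom. -/
def Atom.vars {P F V : Type} (A : Atom P F V) : Set V :=
  varsOf A.inputs ∪ varsOf A.outputs

/-- The set of variables occurring in a query (a list of atoms). -/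
def queryVars {P F V : Type} (Q : List (Atom P F V)) : Set V :=
  {v | ∃ a ∈ Q, v ∈ a.vars}

/-- A query `p_1(s̄_1,t̄_1), …, p_n(s̄_n,t̄_n)` is well-moded iff for every `i`,
`Var(s̄_i) ⊆ ⋃_{j=1}^{i-1} Var(t̄_j)`. -/
def WellModedQuery {P F V : Type} (Q : List (Atom P F V)) : Prop :=
  ∀ i (h : i < Q.length),
    varsOf (Q.get ⟨i, h⟩).inputs ⊆ varsOf (((Q.take i).map Atom.outputs).flatten)

/-- A clause `p_0(t̄_0, s̄_{n+1}) ← p_1(s̄_1,t̄_1), …, p_n(s̄_n,t̄_n)` (with head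
input tuple `t̄_0 = head.inputs` and head output tuple `s̄_{n+1} = head.outputs`)
is well-moded iff for every `i ∈ [1, n+1]`, `Var(s̄_i) ⊆ ⋃_{j=0}^{i-1} Var(t̄_j)`. -/
def WellModedClause {P F V : Type} (head : Atom P F V) (body : List (Atom P F V)) : Prop :=
  (∀ i (h : i < body.length),
    varsOf (body.get ⟨i, h⟩).inputs ⊆
      varsOf (head.inputs ++ ((body.take i).map Atom.outputs).flatten)) ∧
  varsOf head.outputs ⊆ varsOf (head.inputs ++ (body.map Atom.outputs).flatten)

/-- Composition of substitutions: first apply `θ`, then `τ`. -/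
def Subst.comp {F V : Type} (θ τ : V → Term F V) : V → Term F V :=
  fun v => (θ v).subst τ

/-- `θ` is a unifier of the atoms `A` and `H` iff `Aθ = Hθ`. -/
def IsUnifier {P F V : Type} (θ : V → Term F V) (A H : Atom P F V) : Prop :=
  A.subst θ = H.subst θ

/-- `θ` is a most general unifier of `A` and `H` iff it is a unifier and every
unifier of `A` and `H` factors through it. -/
def IsMGU {P F V : Type} (θ : V → Term F V) (A H : Atom P F V) : Prop :=
  IsUnifier θ A H ∧ ∀ σ : V → Term F V, IsUnifier σ A H → ∃ τ : V → Term F V,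
    ∀ v, σ v = (θ v).subst τ

/-- A clause `p_0(s̄_0, t̄_{n+1}) ← p_1(s̄_1,t̄_1), …, p_n(s̄_n,t̄_n)` (with head
input tuple `s̄_0 = head.inputs`) is simply moded iff `t̄_1, …, t̄_n` is a linear
family of variables (every term in the body output tuples is a variable, and
each such variable occurs exactly once among them) and for every `i ∈ [1, n]`,
`Var(t̄_i) ∩ ⋃_{j=0}^{i} Var(s̄_j) = ∅`. -/
def SimplyModedClause {P F V : Type} (head : Atom P F V) (body : List (Atom P F V)) : Prop :=
  (∀ t ∈ (body.map Atom.outputs).flatten, ∃ v : V, t = Term.var v) ∧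
  ((body.map Atom.outputs).flatten).Nodup ∧
  ∀ i (h : i < body.length),
    varsOf (body.get ⟨i, h⟩).outputs ∩
      varsOf (head.inputs ++ ((body.take (i + 1)).map Atom.inputs).flatten) = ∅

/-- A query is simply moded iff the clause `q ← Ā` with a dummy zero-arity head is. -/
def SimplyModedQuery {P F V : Type} (Q : List (Atom P F V)) : Prop :=
  (∀ t ∈ (Q.map Atom.outputs).flatten, ∃ v : V, t = Term.var v) ∧
  ((Q.map Atom.outputs).flatten).Nodup ∧
  ∀ i (h : i < Q.length),
    varsOf (Q.get ⟨i, h⟩).outputs ∩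
      varsOf (((Q.take (i + 1)).map Atom.inputs).flatten) = ∅


/-!
An arbitrary most general unifier `θ` may rename variables, so it is compared with a unifier `σ`
of our own that fixes every output variable of `Bbar` and `Abar`: on the input variables `σ` is
`θ` followed by a renaming of those output variables away, and the output variables of `A`, being
distinct and fresh, are matched against the outputs of `H`. Writing `σ = θτ`, every output
variable `w` is sent by `θ` to a variable that `τ` sends back to `w`; hence `θ` renames the output
variables injectively, and if `θ w` occurred in an input `sθ` of the same or an earlier atom,
then `w` would occur in `sσ`, which simple modedness and variable disjointness rule out.
-/

namespace Term

variable {F V : Type}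

@[simp] lemma subst_var (σ : V → Term F V) (v : V) : (var v).subst σ = σ v := by
  rw [subst]

@[simp] lemma subst_fn (σ : V → Term F V) (f : F) (args : List (Term F V)) :
    (fn f args).subst σ = fn f (args.map (subst σ)) := by
  rw [subst]
  simp only [List.attach_map_val]

lemma varIn_var_iff {v w : V} : (var v : Term F V).VarIn w ↔ w = v :=
  ⟨fun h => by cases h; rfl, fun h => h ▸ .var w⟩

lemma varIn_subst_iff {σ : V → Term F V} {w : V} {t : Term F V} :
    (t.subst σ).VarIn w ↔ ∃ y, t.VarIn y ∧ (σ y).VarIn w := by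
  induction t using subst.induct with
  | case1 v => simp [varIn_var_iff]
  | case2 f args ih =>
    simp only [subst_fn]
    constructor
    · rintro (_ | ⟨_, hmem, hin⟩)
      obtain ⟨t, ht, rfl⟩ := List.mem_map.1 hmem
      obtain ⟨y, hy, hw⟩ := (ih ⟨t, ht⟩).1 hin
      exact ⟨y, .fn f ht hy, hw⟩
    · rintro ⟨y, _ | ⟨_, hmem, hin⟩, hw⟩
      exact .fn f (List.mem_map_of_mem hmem) ((ih ⟨_, hmem⟩).2 ⟨y, hin, hw⟩)

lemma subst_subst (σ τ : V → Term F V) (t : Term F V) :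
    (t.subst σ).subst τ = t.subst (Subst.comp σ τ) := by
  induction t using subst.induct with
  | case1 v => simp [Subst.comp]
  | case2 f args ih =>
    simp only [subst_fn, List.map_map, fn.injEq, true_and]
    exact List.map_congr_left fun t ht => ih ⟨t, ht⟩

lemma subst_congr {σ τ : V → Term F V} {t : Term F V} (h : ∀ v, t.VarIn v → σ v = τ v) :
    t.subst σ = t.subst τ := by
  induction t using subst.induct with
  | case1 v => simpa using h v (.var v)
  | case2 f args ih =>
    simp only [subst_fn, fn.injEq, true_and]
    exact List.map_congr_left fun t ht => ih ⟨t, ht⟩ fun v hv => h v (.fn f ht hv)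

lemma eq_var_of_subst_eq_var {σ : V → Term F V} {t : Term F V} {w : V}
    (h : t.subst σ = var w) : ∃ x, t = var x ∧ σ x = var w := by
  cases t with
  | var x => exact ⟨x, rfl, by simpa using h⟩
  | fn f args => simp at h

end Term

section Vars

variable {P F V : Type}

lemma mem_varsOf_map_subst {σ : V → Term F V} {ts : List (Term F V)} {w : V} :
    w ∈ varsOf (ts.map (Term.subst σ)) ↔ ∃ y ∈ varsOf ts, (σ y).VarIn w := by
  constructor
  · rintro ⟨_, hmem, hw⟩
    obtain ⟨t, ht, rfl⟩ := List.mem_map.1 hmem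
    obtain ⟨y, hy, hw⟩ := Term.varIn_subst_iff.1 hw
    exact ⟨y, ⟨t, ht, hy⟩, hw⟩
  · rintro ⟨y, ⟨t, ht, hy⟩, hw⟩
    exact ⟨_, List.mem_map_of_mem ht, Term.varIn_subst_iff.2 ⟨y, hy, hw⟩⟩

lemma mem_varsOf_flatten_map {α : Type} {f : α → List (Term F V)} {l : List α} {v : V} :
    v ∈ varsOf (l.map f).flatten ↔ ∃ a ∈ l, v ∈ varsOf (f a) := by
  simp only [varsOf, Set.mem_ofPred_eq, List.mem_flatten, List.mem_map]
  constructor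
  · rintro ⟨t, ⟨_, ⟨a, ha, rfl⟩, ht⟩, hv⟩
    exact ⟨a, ha, t, ht, hv⟩
  · rintro ⟨a, ha, t, ht, hv⟩
    exact ⟨t, ⟨_, ⟨a, ha, rfl⟩, ht⟩, hv⟩

lemma mem_varsOf_iff_var_mem {ts : List (Term F V)} (hts : ∀ t ∈ ts, ∃ v, t = .var v) {w : V} :
    w ∈ varsOf ts ↔ .var w ∈ ts := by
  constructor
  · rintro ⟨t, ht, hw⟩
    obtain ⟨v, rfl⟩ := hts t ht
    rwa [Term.varIn_var_iff.1 hw]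
  · exact fun h => ⟨_, h, .var w⟩

lemma map_subst_congr {σ τ : V → Term F V} {ts : List (Term F V)}
    (h : ∀ v ∈ varsOf ts, σ v = τ v) : ts.map (Term.subst σ) = ts.map (Term.subst τ) :=
  List.map_congr_left fun t ht => Term.subst_congr fun v hv => h v ⟨t, ht, hv⟩

lemma queryVars_cons (a : Atom P F V) (Q : List (Atom P F V)) :
    queryVars (a :: Q) = a.vars ∪ queryVars Q := by
  ext v
  simp [queryVars]

lemma queryVars_subset_cons (a : Atom P F V) (Q : List (Atom P F V)) :
    queryVars Q ⊆ queryVars (a :: Q) :=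
  queryVars_cons a Q ▸ Set.subset_union_right

lemma Atom.disjoint_vars_of_mem {Q Q' : List (Atom P F V)}
    (h : Disjoint (queryVars Q) (queryVars Q')) {a b : Atom P F V} (ha : a ∈ Q) (hb : b ∈ Q') : Disjoint a.vars b.vars :=
  h.mono (fun _ hv => show _ ∈ queryVars Q from ⟨a, ha, hv⟩)
    (fun _ hv => show _ ∈ queryVars Q' from ⟨b, hb, hv⟩)

lemma isUnifier_iff {σ : V → Term F V} {A H : Atom P F V} :
    IsUnifier σ A H ↔ A.pred = H.pred ∧ A.inputs.map (Term.subst σ) = H.inputs.map (Term.subst σ) ∧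
      A.outputs.map (Term.subst σ) = H.outputs.map (Term.subst σ) := by
  simp [IsUnifier, Atom.subst]

end Vars

lemma List.forall_mem_take_succ_iff {α : Type} {R : α → α → Prop} {l : List α} :
    (∀ i (h : i < l.length), ∀ b ∈ l.take (i + 1), R b l[i]) ↔
      (∀ a ∈ l, R a a) ∧ l.Pairwise R := by
  rw [List.pairwise_iff_getElem]
  constructor
  · intro h
    refine ⟨fun a ha => ?_, fun j i hj hi hji => h i hi _ ?_⟩
    · obtain ⟨i, hi, rfl⟩ := List.mem_iff_getElem.1 ha
      exact h i hi _ (List.mem_take_iff_getElem.2 ⟨i, by omega, rfl⟩)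
    · exact List.mem_take_iff_getElem.2 ⟨j, by omega, rfl⟩
  · rintro ⟨hself, hpair⟩ i hi b hb
    obtain ⟨j, hj, rfl⟩ := List.mem_take_iff_getElem.1 hb
    rcases (by omega : j < i ∨ j = i) with hji | rfl
    · exact hpair j i _ hi hji
    · exact hself _ (List.getElem_mem _)

section SimplyModed

variable {P F V : Type}

lemma disjoint_varsOf_flatten_map {α : Type} {s : Set V} {f : α → List (Term F V)} {l : List α} :
    Disjoint s (varsOf (l.map f).flatten) ↔ ∀ a ∈ l, Disjoint s (varsOf (f a)) := by
  simp only [Set.disjoint_right, mem_varsOf_flatten_map]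
  exact ⟨fun h a ha v hv => h ⟨a, ha, hv⟩, fun h v ⟨a, ha, hv⟩ => h a ha hv⟩

def LinearOutputs (Q : List (Atom P F V)) : Prop :=
  (∀ t ∈ (Q.map Atom.outputs).flatten, ∃ v, t = .var v) ∧ (Q.map Atom.outputs).flatten.Nodup

lemma simplyModedQuery_iff {Q : List (Atom P F V)} :
    SimplyModedQuery Q ↔ LinearOutputs Q ∧
      (∀ a ∈ Q, Disjoint (varsOf a.outputs) (varsOf a.inputs)) ∧
      Q.Pairwise (fun b a => Disjoint (varsOf a.outputs) (varsOf b.inputs)) := by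
  rw [LinearOutputs, and_assoc]
  refine and_congr_right' (and_congr_right' ?_)
  simp only [List.get_eq_getElem, ← Set.disjoint_iff_inter_eq_empty, disjoint_varsOf_flatten_map]
  exact List.forall_mem_take_succ_iff (l := Q)
    (R := fun b a => Disjoint (varsOf a.outputs) (varsOf b.inputs))

lemma simplyModedClause_iff_simplyModedQuery_cons {H : Atom P F V} {B : List (Atom P F V)} :
    SimplyModedClause H B ↔ SimplyModedQuery (⟨H.pred, H.inputs, []⟩ :: B) := by
  simp only [SimplyModedClause, SimplyModedQuery, List.map_cons, List.flatten_cons, List.nil_append]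
  refine and_congr_right' (and_congr_right' ⟨fun h i hi => ?_, fun h i hi => h (i + 1) (by simpa)⟩)
  cases i with
  | zero => simp [varsOf]
  | succ i => exact h i (by simpa using hi)

lemma simplyModedClause_iff {H : Atom P F V} {B : List (Atom P F V)} :
    SimplyModedClause H B ↔ LinearOutputs B ∧
      (∀ a ∈ B, Disjoint (varsOf a.outputs) (varsOf a.inputs)) ∧
      (∀ a ∈ B, Disjoint (varsOf a.outputs) (varsOf H.inputs)) ∧
      B.Pairwise (fun b a => Disjoint (varsOf a.outputs) (varsOf b.inputs)) := by
  rw [simplyModedClause_iff_simplyModedQuery_cons, simplyModedQuery_iff, List.pairwise_cons]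
  simp [LinearOutputs, varsOf]

end SimplyModed

section Unifiers

variable {P F V : Type}

lemma exists_subst_map_eq (f : V → Term F V) {ts us : List (Term F V)}
    (hvar : ∀ t ∈ ts, ∃ v, t = .var v) (hnodup : ts.Nodup) (hlen : ts.length = us.length) :
    ∃ σ : V → Term F V, (∀ v ∉ varsOf ts, σ v = f v) ∧ ts.map (Term.subst σ) = us := by
  classical
  induction ts generalizing us with
  | nil => exact ⟨f, fun _ _ => rfl, (List.length_eq_zero_iff.1 hlen.symm).symm⟩
  | cons t ts ih =>
    obtain ⟨u, us, rfl⟩ := List.exists_cons_of_length_eq_add_one hlen.symm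
    obtain ⟨y, rfl⟩ := hvar _ List.mem_cons_self
    obtain ⟨hy, hnodup⟩ := List.nodup_cons.1 hnodup
    obtain ⟨σ, hσf, hσ⟩ := ih (fun t ht => hvar t (List.mem_cons_of_mem _ ht)) hnodup
      (by simpa using hlen)
    have hyts : y ∉ varsOf ts := fun h => hy ((mem_varsOf_iff_var_mem
      fun t ht => hvar t (List.mem_cons_of_mem _ ht)).1 h)
    refine ⟨Function.update σ y u, fun v hv => ?_, ?_⟩
    · have hvts : v ∉ varsOf ts := fun ⟨t, ht, hvt⟩ => hv ⟨t, List.mem_cons_of_mem _ ht, hvt⟩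
      rw [Function.update_of_ne fun (h : v = y) => hv ⟨_, List.mem_cons_self, h ▸ .var v⟩,
        hσf v hvts]
    · rw [List.map_cons, Term.subst_var, Function.update_self, ← hσ]
      exact congrArg _ (map_subst_congr fun v hv =>
        Function.update_of_ne (fun (h : v = y) => hyts (h ▸ hv)) _ _)

lemma exists_comp_not_varIn (θ : V → Term F V) (W : Set V) :
    ∃ ρ : V → Term F V, ∀ x ∉ W, ∀ w ∈ W, ¬ (Subst.comp θ ρ x).VarIn w := by
  classical
  by_cases hW : ∃ u, u ∉ W
  · obtain ⟨u, hu⟩ := hW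
    refine ⟨fun y => if y ∈ W then .var u else .var y, fun x _ w hw h => ?_⟩
    obtain ⟨y, -, hy⟩ := Term.varIn_subst_iff.1 h
    split_ifs at hy with hyW
    · exact hu (Term.varIn_var_iff.1 hy ▸ hw)
    · exact hyW (Term.varIn_var_iff.1 hy ▸ hw)
  · push Not at hW
    exact ⟨Term.var, fun x hx => absurd (hW x) hx⟩

lemma exists_subst_fixing (θ : V → Term F V) (W : Set V) :
    ∃ σ ρ : V → Term F V, (∀ w ∈ W, σ w = .var w) ∧ (∀ w ∈ W, ∀ y, (σ y).VarIn w → y = w) ∧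
      ∀ x ∉ W, σ x = Subst.comp θ ρ x := by
  classical
  obtain ⟨ρ, hρ⟩ := exists_comp_not_varIn θ W
  refine ⟨fun x => if x ∈ W then .var x else Subst.comp θ ρ x, ρ, fun w hw => if_pos hw,
    fun w hw y hy => ?_, fun x hx => if_neg hx⟩
  by_cases hyW : y ∈ W
  · simpa [hyW, Term.varIn_var_iff, eq_comm] using hy
  · simp only [hyW, if_false] at hy
    exact absurd hy (hρ y hyW w hw)

lemma exists_unifier_fixing {A H : Atom P F V} {θ : V → Term F V} {W : Set V}
    (hθ : IsUnifier θ A H) (hvar : ∀ t ∈ A.outputs, ∃ v, t = .var v) (hnodup : A.outputs.Nodup)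
    (hAin : Disjoint (varsOf A.inputs) W) (hHin : Disjoint (varsOf H.inputs) W)
    (hAoutW : Disjoint (varsOf A.outputs) W)
    (hAout : Disjoint (varsOf A.outputs) (varsOf A.inputs ∪ H.vars)) :
    ∃ σ : V → Term F V, IsUnifier σ A H ∧ (∀ w ∈ W, σ w = .var w) ∧
      ∀ w ∈ W, ∀ y, (σ y).VarIn w → y = w ∨ (y ∈ varsOf A.outputs ∧ w ∈ varsOf H.outputs) := by
  obtain ⟨hpred, hin, hout⟩ := isUnifier_iff.1 hθ
  obtain ⟨σ₀, ρ, hσ₀fix, hσ₀W, hσ₀ρ⟩ := exists_subst_fixing θ W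
  have hσ₀θ : ∀ ts : List (Term F V), Disjoint (varsOf ts) W →
      ts.map (Term.subst σ₀) = (ts.map (Term.subst θ)).map (Term.subst ρ) := by
    intro ts hts
    rw [List.map_map, map_subst_congr fun v hv => hσ₀ρ v (Set.disjoint_left.1 hts hv)]
    exact List.map_congr_left fun t _ => (Term.subst_subst θ ρ t).symm
  obtain ⟨σ, hσσ₀, hσout⟩ := exists_subst_map_eq σ₀ (us := H.outputs.map (Term.subst σ₀)) hvar
    hnodup (by simpa using congrArg List.length hout)
  have hσ : ∀ ts : List (Term F V), Disjoint (varsOf ts) (varsOf A.outputs) →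
      ts.map (Term.subst σ) = ts.map (Term.subst σ₀) :=
    fun ts hts => map_subst_congr fun v hv => hσσ₀ v (Set.disjoint_left.1 hts hv)
  have hAoutH : Disjoint (varsOf A.outputs) (varsOf H.inputs ∪ varsOf H.outputs) :=
    hAout.mono_right Set.subset_union_right
  refine ⟨σ, isUnifier_iff.2 ⟨hpred, ?_, ?_⟩, fun w hw => ?_, fun w hw y hy => ?_⟩
  · rw [hσ _ (hAout.mono_right Set.subset_union_left).symm,
      hσ _ (hAoutH.mono_right Set.subset_union_left).symm, hσ₀θ _ hAin, hσ₀θ _ hHin, hin]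
  · rw [hσout, hσ _ (hAoutH.mono_right Set.subset_union_right).symm]
  · rw [hσσ₀ w (Set.disjoint_right.1 hAoutW hw), hσ₀fix w hw]
  · by_cases hyA : y ∈ varsOf A.outputs
    · have hmem : σ y ∈ H.outputs.map (Term.subst σ₀) := by
        rw [← hσout, ← Term.subst_var σ y]
        exact List.mem_map_of_mem ((mem_varsOf_iff_var_mem hvar).1 hyA)
      obtain ⟨u, hu, hσy⟩ := List.mem_map.1 hmem
      rw [← hσy, Term.varIn_subst_iff] at hy
      obtain ⟨z, hz, hwz⟩ := hy
      exact Or.inr ⟨hyA, ⟨u, hu, hσ₀W w hw z hwz ▸ hz⟩⟩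
    · rw [hσσ₀ y hyA] at hy
      exact Or.inl (hσ₀W w hw y hy)

end Unifiers

section Resolvent

variable {P F V : Type}

lemma disjoint_varsOf_map_subst_of_comp {os ins : List (Term F V)} {θ τ : V → Term F V}
    (hinv : ∀ v ∈ varsOf os, Subst.comp θ τ v = .var v)
    (h : Disjoint (varsOf os) (varsOf (ins.map (Term.subst (Subst.comp θ τ))))) :
    Disjoint (varsOf (os.map (Term.subst θ))) (varsOf (ins.map (Term.subst θ))) := by
  refine Set.disjoint_left.2 fun x hxo hxi => ?_
  obtain ⟨v, hv, hxv⟩ := mem_varsOf_map_subst.1 hxo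
  obtain ⟨y, hy, hxy⟩ := mem_varsOf_map_subst.1 hxi
  obtain ⟨x', hθv, hτx'⟩ := Term.eq_var_of_subst_eq_var (hinv v hv)
  rw [hθv, Term.varIn_var_iff] at hxv
  subst hxv
  exact Set.disjoint_left.1 h hv
    (mem_varsOf_map_subst.2 ⟨y, hy, Term.varIn_subst_iff.2 ⟨x, hxy, hτx' ▸ .var v⟩⟩)

lemma outputs_flatten_map_subst (θ : V → Term F V) (Q : List (Atom P F V)) :
    ((Q.map (Atom.subst θ)).map Atom.outputs).flatten =
      ((Q.map Atom.outputs).flatten).map (Term.subst θ) := by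
  simp [List.map_flatten, Function.comp_def, Atom.subst]

lemma LinearOutputs.map_subst {Q : List (Atom P F V)} {θ τ : V → Term F V}
    (hlin : LinearOutputs Q)
    (hinv : ∀ v ∈ varsOf (Q.map Atom.outputs).flatten, Subst.comp θ τ v = .var v) :
    LinearOutputs (Q.map (Atom.subst θ)) := by
  obtain ⟨hvar, hnodup⟩ := hlin
  have hinvt : ∀ t ∈ (Q.map Atom.outputs).flatten, (t.subst θ).subst τ = t := by
    intro t ht
    obtain ⟨v, rfl⟩ := hvar t ht
    rw [Term.subst_subst, Term.subst_var]
    exact hinv v ⟨_, ht, .var v⟩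
  rw [LinearOutputs, outputs_flatten_map_subst]
  refine ⟨fun t ht => ?_, hnodup.map_on fun t ht t' ht' h => ?_⟩
  · obtain ⟨t, ht₀, rfl⟩ := List.mem_map.1 ht
    obtain ⟨v, rfl⟩ := hvar t ht₀
    obtain ⟨x, hx, -⟩ := Term.eq_var_of_subst_eq_var (hinv v ⟨_, ht₀, .var v⟩)
    exact ⟨x, by rw [Term.subst_var, hx]⟩
  · rw [← hinvt t ht, ← hinvt t' ht', h]

lemma simplyModedQuery_map_subst {Q : List (Atom P F V)} {θ τ : V → Term F V}
    (hlin : LinearOutputs Q)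
    (hinv : ∀ v ∈ varsOf (Q.map Atom.outputs).flatten, Subst.comp θ τ v = .var v)
    (hself : ∀ a ∈ Q, Disjoint (varsOf a.outputs) (varsOf (a.subst (Subst.comp θ τ)).inputs))
    (hpair : Q.Pairwise fun b a =>
      Disjoint (varsOf a.outputs) (varsOf (b.subst (Subst.comp θ τ)).inputs)) :
    SimplyModedQuery (Q.map (Atom.subst θ)) := by
  have hinva : ∀ a ∈ Q, ∀ v ∈ varsOf a.outputs, Subst.comp θ τ v = .var v :=
    fun a ha v hv => hinv v (mem_varsOf_flatten_map.2 ⟨a, ha, hv⟩)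
  refine simplyModedQuery_iff.2 ⟨hlin.map_subst hinv, ?_, ?_⟩
  · simp only [List.forall_mem_map]
    exact fun a ha => disjoint_varsOf_map_subst_of_comp (hinva a ha) (hself a ha)
  · exact List.pairwise_map.2 (hpair.imp_of_mem fun _ ha h =>
      disjoint_varsOf_map_subst_of_comp (hinva _ ha) h)

end Resolvent

section LDResolvent

variable {P F V : Type}

lemma Atom.varsOf_inputs_subset (a : Atom P F V) : varsOf a.inputs ⊆ a.vars :=
  Set.subset_union_left

lemma Atom.varsOf_outputs_subset (a : Atom P F V) : varsOf a.outputs ⊆ a.vars :=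
  Set.subset_union_right

lemma varsOf_flatten_outputs_subset (Q : List (Atom P F V)) :
    varsOf (Q.map Atom.outputs).flatten ⊆ queryVars Q := fun v hv => by
  obtain ⟨a, ha, hv⟩ := mem_varsOf_flatten_map.1 hv
  exact ⟨a, ha, Or.inr hv⟩

lemma LinearOutputs.of_cons {A : Atom P F V} {Q : List (Atom P F V)} (h : LinearOutputs (A :: Q)) :
    (∀ t ∈ A.outputs, ∃ v, t = .var v) ∧ A.outputs.Nodup ∧ LinearOutputs Q ∧
      ∀ a ∈ Q, Disjoint (varsOf A.outputs) (varsOf a.outputs) := by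
  obtain ⟨hvar, hnodup⟩ := h
  simp only [List.map_cons, List.flatten_cons, List.forall_mem_append] at hvar hnodup
  refine ⟨hvar.1, hnodup.of_append_left, ⟨hvar.2, hnodup.of_append_right⟩,
    disjoint_varsOf_flatten_map.1 (Set.disjoint_left.2 fun v h₁ h₂ => ?_)⟩
  rw [mem_varsOf_iff_var_mem hvar.1] at h₁
  rw [mem_varsOf_iff_var_mem hvar.2] at h₂
  exact List.disjoint_of_nodup_append hnodup h₁ h₂

lemma LinearOutputs.append {Q Q' : List (Atom P F V)} (hQ : LinearOutputs Q)
    (hQ' : LinearOutputs Q') (h : Disjoint (queryVars Q) (queryVars Q')) :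
    LinearOutputs (Q ++ Q') := by
  obtain ⟨hvar, hnodup⟩ := hQ
  obtain ⟨hvar', hnodup'⟩ := hQ'
  simp only [LinearOutputs, List.map_append, List.flatten_append, List.forall_mem_append]
  refine ⟨⟨hvar, hvar'⟩, List.nodup_append.2 ⟨hnodup, hnodup', ?_⟩⟩
  rintro t ht _ ht' rfl
  obtain ⟨v, rfl⟩ := hvar t ht
  exact Set.disjoint_left.1 h (varsOf_flatten_outputs_subset Q ⟨_, ht, .var v⟩)
    (varsOf_flatten_outputs_subset Q' ⟨_, ht', .var v⟩)

lemma disjoint_varsOf_map_subst_of_varIn {σ : V → Term F V} {W X Y : Set V}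
    (hσ : ∀ w ∈ W, ∀ y, (σ y).VarIn w → y = w ∨ (y ∈ X ∧ w ∈ Y)) {os ins : List (Term F V)}
    (hos : varsOf os ⊆ W) (h : Disjoint (varsOf os) (varsOf ins))
    (hside : Disjoint (varsOf ins) X ∨ Disjoint (varsOf os) Y) :
    Disjoint (varsOf os) (varsOf (ins.map (Term.subst σ))) := by
  refine Set.disjoint_left.2 fun w hwo hwi => ?_
  obtain ⟨y, hy, hwy⟩ := mem_varsOf_map_subst.1 hwi
  rcases hσ w (hos hwo) y hwy with rfl | ⟨hyX, hwY⟩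
  · exact Set.disjoint_left.1 h hwo hy
  · rcases hside with hside | hside
    · exact Set.disjoint_left.1 hside hy hyX
    · exact Set.disjoint_left.1 hside hwo hwY

variable {A H : Atom P F V} {Abar Bbar : List (Atom P F V)}

lemma exists_unifier_fixing_resolvent_outputs {θ : V → Term F V}
    (hquery : SimplyModedQuery (A :: Abar)) (hclause : SimplyModedClause H Bbar)
    (hdisj : ∀ a ∈ A :: Abar, ∀ b ∈ H :: Bbar, Disjoint a.vars b.vars) (hθ : IsUnifier θ A H) :
    ∃ σ : V → Term F V, IsUnifier σ A H ∧
      (∀ w ∈ varsOf ((Bbar ++ Abar).map Atom.outputs).flatten, σ w = .var w) ∧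
      ∀ w ∈ varsOf ((Bbar ++ Abar).map Atom.outputs).flatten, ∀ y, (σ y).VarIn w →
        y = w ∨ (y ∈ varsOf A.outputs ∧ w ∈ varsOf H.outputs) := by
  obtain ⟨hqlin, hqself, hqpair⟩ := simplyModedQuery_iff.1 hquery
  obtain ⟨hAvar, hAnodup, -, hAAbar⟩ := hqlin.of_cons
  obtain ⟨-, -, hBH, -⟩ := simplyModedClause_iff.1 hclause
  have hAbarA := (List.pairwise_cons.1 hqpair).1
  have hAB : ∀ b ∈ Bbar, Disjoint A.vars b.vars :=
    fun b hb => hdisj A List.mem_cons_self b (List.mem_cons_of_mem _ hb)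
  have hW : ∀ s : Set V, (∀ b ∈ Bbar, Disjoint s (varsOf b.outputs)) →
      (∀ a ∈ Abar, Disjoint s (varsOf a.outputs)) →
      Disjoint s (varsOf ((Bbar ++ Abar).map Atom.outputs).flatten) :=
    fun s hB hA => disjoint_varsOf_flatten_map.2 (List.forall_mem_append.2 ⟨hB, hA⟩)
  refine exists_unifier_fixing hθ hAvar hAnodup ?_ ?_ ?_ ?_
  · exact hW _ (fun b hb => (hAB b hb).mono A.varsOf_inputs_subset b.varsOf_outputs_subset)
      (fun a ha => (hAbarA a ha).symm)
  · exact hW _ (fun b hb => (hBH b hb).symm) fun a ha =>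
      ((hdisj a (List.mem_cons_of_mem _ ha) H List.mem_cons_self).mono a.varsOf_outputs_subset
        H.varsOf_inputs_subset).symm
  · exact hW _ (fun b hb => (hAB b hb).mono A.varsOf_outputs_subset b.varsOf_outputs_subset)
      hAAbar
  · exact Set.disjoint_union_right.2 ⟨hqself A List.mem_cons_self,
      (hdisj A List.mem_cons_self H List.mem_cons_self).mono_left A.varsOf_outputs_subset⟩

lemma resolvent_outputs_disjoint_inputs {σ : V → Term F V}
    (hquery : SimplyModedQuery (A :: Abar)) (hclause : SimplyModedClause H Bbar)
    (hdisj : ∀ a ∈ A :: Abar, ∀ b ∈ H :: Bbar, Disjoint a.vars b.vars)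
    (hσ : ∀ w ∈ varsOf ((Bbar ++ Abar).map Atom.outputs).flatten, ∀ y, (σ y).VarIn w →
        y = w ∨ (y ∈ varsOf A.outputs ∧ w ∈ varsOf H.outputs)) :
    (∀ a ∈ Bbar ++ Abar, Disjoint (varsOf a.outputs) (varsOf (a.subst σ).inputs)) ∧
      (Bbar ++ Abar).Pairwise fun b a =>
        Disjoint (varsOf a.outputs) (varsOf (b.subst σ).inputs) := by
  obtain ⟨-, hqself, hqpair⟩ := simplyModedQuery_iff.1 hquery
  obtain ⟨-, hBself, -, hBpair⟩ := simplyModedClause_iff.1 hclause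
  let R : Atom P F V → Atom P F V → Prop := fun b a =>
    Disjoint (varsOf a.outputs) (varsOf b.inputs) ∧
      (Disjoint (varsOf b.inputs) (varsOf A.outputs) ∨
        Disjoint (varsOf a.outputs) (varsOf H.outputs))
  have hR : ∀ b a, a ∈ Bbar ++ Abar → R b a →
      Disjoint (varsOf a.outputs) (varsOf (b.subst σ).inputs) := fun b a ha h =>
    disjoint_varsOf_map_subst_of_varIn hσ (fun v hv => mem_varsOf_flatten_map.2 ⟨a, ha, hv⟩)
      h.1 h.2
  have hBA : ∀ b ∈ Bbar, Disjoint (varsOf b.inputs) (varsOf A.outputs) := fun b hb =>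
    ((hdisj A List.mem_cons_self b (List.mem_cons_of_mem _ hb)).mono A.varsOf_outputs_subset
      b.varsOf_inputs_subset).symm
  have hAbarH : ∀ a ∈ Abar, Disjoint (varsOf a.outputs) (varsOf H.outputs) := fun a ha =>
    (hdisj a (List.mem_cons_of_mem _ ha) H List.mem_cons_self).mono a.varsOf_outputs_subset
      H.varsOf_outputs_subset
  have hself : ∀ a ∈ Bbar ++ Abar, R a a := by
    intro a ha
    rcases List.mem_append.1 ha with ha | ha
    · exact ⟨hBself a ha, .inl (hBA a ha)⟩
    · exact ⟨hqself a (List.mem_cons_of_mem _ ha), .inr (hAbarH a ha)⟩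
  have hpair : (Bbar ++ Abar).Pairwise R := List.pairwise_append.2
    ⟨hBpair.imp_of_mem fun hb _ h => ⟨h, .inl (hBA _ hb)⟩,
      (List.pairwise_cons.1 hqpair).2.imp_of_mem fun _ ha h => ⟨h, .inr (hAbarH _ ha)⟩,
      fun b hb a ha => ⟨((hdisj a (List.mem_cons_of_mem _ ha) b (List.mem_cons_of_mem _ hb)).mono
        a.varsOf_outputs_subset b.varsOf_inputs_subset), .inl (hBA b hb)⟩⟩
  exact ⟨fun a ha => hR a a ha (hself a ha), hpair.imp_of_mem fun _ ha h => hR _ _ ha h⟩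

end LDResolvent

/-- An LD-resolvent of a simply moded query and a simply moded clause that is
variable-disjoint with it is simply moded: if `A :: Abar` is a simply moded
query with leftmost atom `A`, `H ← Bbar` is a simply moded clause sharing no
variables with the query, and `θ` is a most general unifier of `A` and `H`,
then the LD-resolvent `(Bbar ++ Abar)θ` is a simply moded query. -/
theorem ld_resolvent_simply_moded
    {P F V : Type} (A : Atom P F V) (Abar : List (Atom P F V))
    (H : Atom P F V) (Bbar : List (Atom P F V)) (θ : V → Term F V)
    (hquery : SimplyModedQuery (A :: Abar))
    (hclause : SimplyModedClause H Bbar)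
    (hdisj : Disjoint (queryVars (A :: Abar)) (H.vars ∪ queryVars Bbar))
    (hmgu : IsMGU θ A H) :
    SimplyModedQuery ((Bbar ++ Abar).map (Atom.subst θ)) := by
  rw [← queryVars_cons] at hdisj
  have hatoms : ∀ a ∈ A :: Abar, ∀ b ∈ H :: Bbar, Disjoint a.vars b.vars :=
    fun a ha b hb => Atom.disjoint_vars_of_mem hdisj ha hb
  have hlin : LinearOutputs (Bbar ++ Abar) :=
    (simplyModedClause_iff.1 hclause).1.append (simplyModedQuery_iff.1 hquery).1.of_cons.2.2.1
      (hdisj.symm.mono (queryVars_subset_cons H Bbar) (queryVars_subset_cons A Abar))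
  obtain ⟨σ, hσ, hσfix, hσocc⟩ :=
    exists_unifier_fixing_resolvent_outputs hquery hclause hatoms hmgu.1
  obtain ⟨τ, hτ⟩ := hmgu.2 σ hσ
  obtain rfl : σ = Subst.comp θ τ := funext hτ
  obtain ⟨hself, hpair⟩ := resolvent_outputs_disjoint_inputs hquery hclause hatoms hσocc
  exact simplyModedQuery_map_subst hlin hσfix hself hpair
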